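/- For any fixed d and sufficiently large n, suppose G is an n-vertex graph with average degree d in which every subgraph on at most s vertices has average degree at most (1/2)(1/α − 1), where 0 < α < 1/5. Let H be the bipartite double cover of G (two copies A, B of V(G), with a ∈ A adjacent to b ∈ B iff ab ∈ E(G)). Then H is a (k, α/2)-multitasker for every k ≤ s/2: every matching of size at most s/2 in H contains an induced matching comprising at least an α/2 fraction of its edges. -/

import Mathlib

/-- `M` is a matching in `G`: a set of edges of `G` that are pairwise vertex-disjoint. -/
def IsMatchingSet {V : Type*} (G : SimpleGraph V) (M : Finset (Sym2 V)) : Prop :=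
  (↑M ⊆ G.edgeSet) ∧ ∀ e ∈ M, ∀ f ∈ M, e ≠ f → ∀ v : V, v ∈ e → v ∉ f

/-- `M` is an induced matching in `G`. -/
def IsInducedMatchingSet {V : Type*} (G : SimpleGraph V) (M : Finset (Sym2 V)) : Prop :=
  IsMatchingSet G M ∧
    ∀ e ∈ M, ∀ f ∈ M, e ≠ f → ∀ u v : V, u ∈ e → v ∈ f → ¬ G.Adj u v

/-- The bipartite double cover of `G`: two copies `V × {false, true}` of the vertices,
with `(u, i)` adjacent to `(v, j)` iff `u ~ v` in `G` and `i ≠ j`. -/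
def doubleCover {V : Type*} (G : SimpleGraph V) : SimpleGraph (V × Bool) :=
  SimpleGraph.fromRel fun a b => G.Adj a.1 b.1 ∧ a.2 ≠ b.2

open Finset

lemma card_le_card_of_rel {A B : Type*} (s : Finset A) (t : Finset B)
    (r : A → B → Prop)
    (h : ∀ a ∈ s, ∃ b ∈ t, r a b)
    (hinj : ∀ a ∈ s, ∀ a' ∈ s, ∀ b, r a b → r a' b → a = a') :
    s.card ≤ t.card := by
  classical
  rcases s.eq_empty_or_nonempty with rfl | ⟨a0, ha0⟩
  · simp
  obtain ⟨b0, hb0, -⟩ := h a0 ha0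
  have key : ∀ a : A, ∃ b : B, a ∈ s → b ∈ t ∧ r a b := by
    intro a
    by_cases ha : a ∈ s
    · obtain ⟨b, hb, hr⟩ := h a ha
      exact ⟨b, fun _ => ⟨hb, hr⟩⟩
    · exact ⟨b0, fun hc => absurd hc ha⟩
  choose f hf using key
  apply Finset.card_le_card_of_injOn f
  · intro a ha; exact (hf a ha).1
  · intro a ha a' ha' heq
    exact hinj a ha a' ha' (f a) (hf a ha).2 (heq ▸ (hf a' ha').2)

lemma caroWei {E : Type*} [DecidableEq E] (R : E → E → Prop) [DecidableRel R]
    (hsym : ∀ a b, R a b → R b a) :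
    ∀ M : Finset E, ∃ I ⊆ M, (∀ e ∈ I, ∀ f ∈ I, e ≠ f → ¬ R e f) ∧
      ∑ e ∈ M, (1 : ℝ) / ((M.filter (R e)).card + 1) ≤ I.card := by
  intro M
  induction M using Finset.strongInduction with
  | _ M ih =>
  rcases M.eq_empty_or_nonempty with rfl | hne
  · exact ⟨∅, by simp⟩
  obtain ⟨e, heM, hmin⟩ := M.exists_min_image (fun e => (M.filter (R e)).card) hne
  set N := M.filter (fun f => f = e ∨ R e f) with hN
  set M' := M \ N with hM'
  have heN : e ∈ N := mem_filter.2 ⟨heM, Or.inl rfl⟩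
  have heM' : e ∉ M' := fun hc => (mem_sdiff.1 hc).2 heN
  have hssub : M' ⊂ M := by
    refine ⟨sdiff_subset, fun hsub => (mem_sdiff.1 (hsub heM)).2 heN⟩
  obtain ⟨I, hIsub, hIind, hIsum⟩ := ih M' hssub
  have heI : e ∉ I := fun hc => heM' (hIsub hc)
  have hnotN : ∀ g ∈ I, ¬ R e g := by
    intro g hg
    have := (mem_sdiff.1 (hIsub hg)).2
    intro hr
    exact this (mem_filter.2 ⟨(mem_sdiff.1 (hIsub hg)).1, Or.inr hr⟩)
  refine ⟨insert e I, ?_, ?_, ?_⟩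
  · exact insert_subset heM (hIsub.trans sdiff_subset)
  · intro f hf g hg hfg hr
    rcases mem_insert.1 hf with hfe | hfI
    · rcases mem_insert.1 hg with hge | hgI
      · exact hfg (hfe.trans hge.symm)
      · exact hnotN g hgI (hfe ▸ hr)
    · rcases mem_insert.1 hg with hge | hgI
      · exact hnotN f hfI (hsym _ _ (hge ▸ hr))
      · exact hIind f hfI g hgI hfg hr
  · have hcard : ((insert e I).card : ℝ) = I.card + 1 := by
      rw [card_insert_of_notMem heI]; push_cast; ring
    rw [hcard]
    have hsplit : ∑ f ∈ M, (1 : ℝ) / ((M.filter (R f)).card + 1)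
        = ∑ f ∈ M', (1 : ℝ) / ((M.filter (R f)).card + 1)
          + ∑ f ∈ N, (1 : ℝ) / ((M.filter (R f)).card + 1) := by
      rw [hM', Finset.sum_sdiff (filter_subset _ _)]
    rw [hsplit]
    have h1 : ∑ f ∈ M', (1 : ℝ) / ((M.filter (R f)).card + 1)
        ≤ ∑ f ∈ M', (1 : ℝ) / ((M'.filter (R f)).card + 1) := by
      apply Finset.sum_le_sum
      intro f hf
      apply one_div_le_one_div_of_le (by positivity)
      have : (M'.filter (R f)).card ≤ (M.filter (R f)).card :=
        card_le_card (filter_subset_filter _ sdiff_subset)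
      exact_mod_cast Nat.add_le_add_right this 1
    have h2 : ∑ f ∈ N, (1 : ℝ) / ((M.filter (R f)).card + 1) ≤ 1 := by
      have hterm : ∀ f ∈ N, (1 : ℝ) / ((M.filter (R f)).card + 1)
          ≤ 1 / ((M.filter (R e)).card + 1) := by
        intro f hf
        apply one_div_le_one_div_of_le (by positivity)
        have := hmin f (filter_subset _ _ hf)
        exact_mod_cast Nat.add_le_add_right this 1
      calc ∑ f ∈ N, (1 : ℝ) / ((M.filter (R f)).card + 1)
          ≤ N.card • ((1:ℝ) / ((M.filter (R e)).card + 1)) :=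
            Finset.sum_le_card_nsmul _ _ _ hterm
        _ = N.card / ((M.filter (R e)).card + 1) := by
            rw [nsmul_eq_mul]; ring
        _ ≤ 1 := by
            rw [div_le_one (by positivity)]
            have hsub : N ⊆ insert e (M.filter (R e)) := by
              intro f hf
              rcases mem_filter.1 hf with ⟨hfM, rfl | hr⟩
              · exact mem_insert_self _ _
              · exact mem_insert_of_mem (mem_filter.2 ⟨hfM, hr⟩)
            have := (card_le_card hsub).trans (card_insert_le _ _)
            push_cast
            calc (N.card : ℝ) ≤ ((M.filter (R e)).card : ℝ) + 1 := by exact_mod_cast this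
              _ = _ := by ring
    linarith

lemma cs_aux {E : Type*} (M : Finset E) (g : E → ℝ) (hg : ∀ e ∈ M, 0 < g e) :
    (M.card : ℝ) ^ 2 ≤ (∑ e ∈ M, g e) * ∑ e ∈ M, 1 / g e := by
  have hcs := Finset.sum_mul_sq_le_sq_mul_sq M (fun e => Real.sqrt (g e))
    (fun e => 1 / Real.sqrt (g e))
  have h1 : ∑ e ∈ M, Real.sqrt (g e) * (1 / Real.sqrt (g e)) = (M.card : ℝ) := by
    rw [Finset.sum_congr rfl (fun e he => mul_one_div_cancel
      (Real.sqrt_pos.2 (hg e he)).ne')]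
    simp
  have h2 : ∑ e ∈ M, Real.sqrt (g e) ^ 2 = ∑ e ∈ M, g e :=
    Finset.sum_congr rfl fun e he => Real.sq_sqrt (hg e he).le
  have h3 : ∑ e ∈ M, (1 / Real.sqrt (g e)) ^ 2 = ∑ e ∈ M, 1 / g e := by
    refine Finset.sum_congr rfl fun e he => ?_
    rw [div_pow, one_pow, Real.sq_sqrt (hg e he).le]
  rw [h1, h2, h3] at hcs
  exact hcs


/-- Suppose `G` is an `n`-vertex graph with average degree `d` in which every subgraph on
at most `s` vertices has average degree at most `(1/2)(1/α − 1)`, where `0 < α < 1/5`.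
Then the bipartite double cover `H` of `G` is a `(k, α/2)`-multitasker for every
`k ≤ s/2`: every matching in `H` of size at most `s/2` contains an induced matching
comprising at least an `α/2` fraction of its edges. -/
theorem stmt18 {V : Type*} [Fintype V] [DecidableEq V] (G : SimpleGraph V)
    [DecidableRel G.Adj] (d : ℝ)
    (hd : (∑ v, (G.degree v : ℝ)) / Fintype.card V = d)
    (s : ℕ) (α : ℝ) (hα0 : 0 < α) (hα : α < 1 / 5)
    (hloc : ∀ S : Finset V, S.card ≤ s →
      (∑ v ∈ S, ((S.filter (G.Adj v ·)).card : ℝ)) / S.card ≤ (1 / 2) * (1 / α - 1)) :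
    ∀ M : Finset (Sym2 (V × Bool)), IsMatchingSet (doubleCover G) M →
      2 * M.card ≤ s →
      ∃ M' ⊆ M, IsInducedMatchingSet (doubleCover G) M' ∧
        (α / 2) * M.card ≤ (M'.card : ℝ) := by
  classical
  intro M hM hMs
  set R : Sym2 (V × Bool) → Sym2 (V × Bool) → Prop :=
    fun e f => e ≠ f ∧ ∃ u v, u ∈ e ∧ v ∈ f ∧ (doubleCover G).Adj u v with hRdef
  have hsym : ∀ a b, R a b → R b a := by
    rintro a b ⟨hne, u, v, hu, hv, hadj⟩
    exact ⟨hne.symm, v, u, hv, hu, hadj.symm⟩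
  obtain ⟨I, hIM, hIind, hIsum⟩ := caroWei R hsym M
  refine ⟨I, hIM, ⟨⟨?_, ?_⟩, ?_⟩, ?_⟩
  · exact fun x hx => hM.1 (Finset.coe_subset.2 hIM hx)
  · exact fun e he f hf => hM.2 e (hIM he) f (hIM hf)
  · intro e he f hf hef u v hu hv hadj
    exact hIind e he f hf hef ⟨hef, u, v, hu, hv, hadj⟩
  -- the size bound
  rcases M.eq_empty_or_nonempty with rfl | hMne
  · simp
  set T : Finset (V × Bool) := M.biUnion (fun e => Finset.univ.filter (· ∈ e)) with hTdef
  set S : Finset V := T.image Prod.fst with hSdef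
  -- each edge has at most 2 vertices
  have hvert2 : ∀ e : Sym2 (V × Bool), (Finset.univ.filter (· ∈ e)).card ≤ 2 := by
    intro e
    induction e using Sym2.ind with
    | _ a b =>
      have hsub : Finset.univ.filter (· ∈ s(a, b)) ⊆ {a, b} := by
        intro v hv
        have := (Finset.mem_filter.1 hv).2
        rw [Sym2.mem_iff] at this
        simp [this]
      refine (Finset.card_le_card hsub).trans ?_
      exact (Finset.card_insert_le _ _).trans (by simp)
  have hT2 : T.card ≤ 2 * M.card := by
    refine (Finset.card_biUnion_le).trans ?_
    calc ∑ e ∈ M, (Finset.univ.filter (· ∈ e)).card ≤ ∑ _e ∈ M, 2 :=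
          Finset.sum_le_sum fun e _ => hvert2 e
      _ = 2 * M.card := by rw [Finset.sum_const, smul_eq_mul, mul_comm]
  have hScard : S.card ≤ s := le_trans (le_trans Finset.card_image_le hT2) hMs
  -- adjacency in double cover gives adjacency in G on first coords
  have hadjG : ∀ u v : V × Bool, (doubleCover G).Adj u v → G.Adj u.1 v.1 ∧ u.2 ≠ v.2 := by
    intro u v h
    rw [doubleCover, SimpleGraph.fromRel_adj] at h
    rcases h.2 with ⟨h1, h2⟩ | ⟨h1, h2⟩
    · exact ⟨h1, h2⟩
    · exact ⟨h1.symm, h2.symm⟩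
  -- Step 1–3: degree bound per edge
  have hdeg : ∀ e ∈ M, (M.filter (R e)).card
      ≤ ∑ u ∈ Finset.univ.filter (· ∈ e), (S.filter (G.Adj u.1 ·)).card := by
    intro e heM
    have step1 : (M.filter (R e)).card
        ≤ ((Finset.univ.filter (· ∈ e)).biUnion
            (fun u => T.filter (fun v => (doubleCover G).Adj u v))).card := by
      apply card_le_card_of_rel _ _ (fun f v => v ∈ f)
      · rintro f hf
        obtain ⟨hfM, hne, u, v, hu, hv, hadj⟩ := Finset.mem_filter.1 hf
        refine ⟨v, ?_, hv⟩
        rw [Finset.mem_biUnion]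
        refine ⟨u, by simp [hu], ?_⟩
        rw [Finset.mem_filter]
        refine ⟨?_, hadj⟩
        rw [hTdef, Finset.mem_biUnion]
        exact ⟨f, hfM, by simp [hv]⟩
      · intro f hf f' hf' v hv hv'
        by_contra hne
        exact hM.2 f (Finset.filter_subset _ _ hf) f' (Finset.filter_subset _ _ hf') hne v hv hv'
    have step2 : ((Finset.univ.filter (· ∈ e)).biUnion
          (fun u => T.filter (fun v => (doubleCover G).Adj u v))).card
        ≤ ∑ u ∈ Finset.univ.filter (· ∈ e),
            (T.filter (fun v => (doubleCover G).Adj u v)).card :=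
      Finset.card_biUnion_le
    have step3 : ∀ u : V × Bool, (T.filter (fun v => (doubleCover G).Adj u v)).card
        ≤ (S.filter (G.Adj u.1 ·)).card := by
      intro u
      apply Finset.card_le_card_of_injOn Prod.fst
      · intro v hv
        obtain ⟨hvT, hadj⟩ := Finset.mem_filter.1 hv
        rw [Finset.mem_coe, Finset.mem_filter]
        exact ⟨Finset.mem_image_of_mem _ hvT, (hadjG u v hadj).1⟩
      · intro v hv v' hv' hfst
        have h1 := (hadjG u v (Finset.mem_filter.1 hv).2).2
        have h2 := (hadjG u v' (Finset.mem_filter.1 hv').2).2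
        have : v.2 = v'.2 := by
          revert h1 h2; cases u.2 <;> cases v.2 <;> cases v'.2 <;> simp
        exact Prod.ext hfst this
    exact step1.trans (step2.trans (Finset.sum_le_sum fun u _ => step3 u))
  -- Step 4: sum over M of inner sums equals sum over T
  have hdisj : (↑M : Set (Sym2 (V × Bool))).PairwiseDisjoint
      (fun e => Finset.univ.filter (· ∈ e)) := by
    intro e he f hf hef
    simp only [Function.onFun]
    rw [Finset.disjoint_left]
    intro v hv hv'
    exact hM.2 e he f hf hef v (Finset.mem_filter.1 hv).2 (Finset.mem_filter.1 hv').2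
  have hsum4 : ∑ e ∈ M, ∑ u ∈ Finset.univ.filter (· ∈ e), (S.filter (G.Adj u.1 ·)).card
      = ∑ u ∈ T, (S.filter (G.Adj u.1 ·)).card := by
    rw [hTdef, Finset.sum_biUnion hdisj]
  -- Step 5: sum over T bounded by twice sum over S
  have hsum5 : ∑ u ∈ T, (S.filter (G.Adj u.1 ·)).card
      ≤ ∑ x ∈ S, 2 * (S.filter (G.Adj x ·)).card := by
    have hTsub : T ⊆ S ×ˢ (Finset.univ : Finset Bool) := by
      intro u hu
      rw [Finset.mem_product]
      exact ⟨Finset.mem_image_of_mem _ hu, Finset.mem_univ _⟩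
    calc ∑ u ∈ T, (S.filter (G.Adj u.1 ·)).card
        ≤ ∑ u ∈ S ×ˢ (Finset.univ : Finset Bool), (S.filter (G.Adj u.1 ·)).card :=
          Finset.sum_le_sum_of_subset hTsub
      _ = ∑ x ∈ S, 2 * (S.filter (G.Adj x ·)).card := by
          rw [Finset.sum_product]
          refine Finset.sum_congr rfl fun x _ => ?_
          simp [Finset.sum_const, two_mul]
  -- total degree bound (natural numbers)
  have hDnat : ∑ e ∈ M, (M.filter (R e)).card ≤ 2 * ∑ x ∈ S, (S.filter (G.Adj x ·)).card := by
    calc ∑ e ∈ M, (M.filter (R e)).card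
        ≤ ∑ e ∈ M, ∑ u ∈ Finset.univ.filter (· ∈ e), (S.filter (G.Adj u.1 ·)).card :=
          Finset.sum_le_sum hdeg
      _ = ∑ u ∈ T, (S.filter (G.Adj u.1 ·)).card := hsum4
      _ ≤ ∑ x ∈ S, 2 * (S.filter (G.Adj x ·)).card := hsum5
      _ = 2 * ∑ x ∈ S, (S.filter (G.Adj x ·)).card := by rw [Finset.mul_sum]
  -- real bound from hloc
  have hαinv : (1 : ℝ) < 1 / α := by
    rw [lt_div_iff₀ hα0]; nlinarith
  have hSsum : (∑ x ∈ S, ((S.filter (G.Adj x ·)).card : ℝ))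
      ≤ (1 / 2) * (1 / α - 1) * S.card := by
    by_cases hSe : S = ∅
    · rw [hSe]; simp
    · have hSpos : (0 : ℝ) < S.card := by
        exact_mod_cast Finset.card_pos.2 (Finset.nonempty_of_ne_empty hSe)
      have := hloc S hScard
      rw [div_le_iff₀ hSpos] at this
      exact this
  have hD : (∑ e ∈ M, ((M.filter (R e)).card : ℝ)) ≤ (1 / α - 1) * (2 * M.card) := by
    have hcast : (∑ e ∈ M, ((M.filter (R e)).card : ℝ))
        ≤ 2 * ∑ x ∈ S, ((S.filter (G.Adj x ·)).card : ℝ) := by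
      push_cast
      exact_mod_cast hDnat
    have hS2 : (S.card : ℝ) ≤ 2 * M.card := by
      exact_mod_cast le_trans Finset.card_image_le hT2
    calc (∑ e ∈ M, ((M.filter (R e)).card : ℝ))
        ≤ 2 * ((1 / 2) * (1 / α - 1) * S.card) := by linarith
      _ = (1 / α - 1) * S.card := by ring
      _ ≤ (1 / α - 1) * (2 * M.card) := by
          apply mul_le_mul_of_nonneg_left hS2; linarith
  -- Cauchy–Schwarz conclusion
  set n : ℝ := (M.card : ℝ) with hn
  have hnpos : (0 : ℝ) < n := by
    rw [hn]; exact_mod_cast Finset.card_pos.2 hMne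
  set g : Sym2 (V × Bool) → ℝ := fun e => ((M.filter (R e)).card : ℝ) + 1 with hg
  have hgpos : ∀ e ∈ M, 0 < g e := fun e _ => by positivity
  have hcs := cs_aux M g hgpos
  have hB : ∑ e ∈ M, g e ≤ (2 / α) * n := by
    have : ∑ e ∈ M, g e = (∑ e ∈ M, ((M.filter (R e)).card : ℝ)) + n := by
      rw [hg]; rw [Finset.sum_add_distrib]; simp [hn]
    rw [this]
    have h1α : 1 / α = (1 : ℝ) / α := rfl
    calc (∑ e ∈ M, ((M.filter (R e)).card : ℝ)) + n
        ≤ (1 / α - 1) * (2 * n) + n := by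
          linarith [hD]
      _ = (2 / α) * n - n := by ring
      _ ≤ (2 / α) * n := by linarith
  have hBpos : (0 : ℝ) ≤ ∑ e ∈ M, g e :=
    Finset.sum_nonneg fun e he => (hgpos e he).le
  have hfinal : n ^ 2 ≤ ((2 / α) * n) * I.card := by
    calc n ^ 2 ≤ (∑ e ∈ M, g e) * ∑ e ∈ M, 1 / g e := hcs
      _ ≤ (∑ e ∈ M, g e) * I.card := by
          apply mul_le_mul_of_nonneg_left _ hBpos
          exact hIsum
      _ ≤ ((2 / α) * n) * I.card := by
          exact mul_le_mul_of_nonneg_right hB (Nat.cast_nonneg _)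
  have hIc : (0 : ℝ) ≤ (I.card : ℝ) := Nat.cast_nonneg _
  have hkey : α * n ^ 2 ≤ 2 * n * I.card := by
    have h := mul_le_mul_of_nonneg_left hfinal hα0.le
    have heq : α * (2 / α * n * I.card) = 2 * n * I.card := by
      field_simp
    linarith [h, heq.le, heq.ge]
  nlinarith [hkey, hnpos, hα0, hIc, mul_pos hnpos hnpos]
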